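/- Let L_RCM ⊆ {a,b}* consist of all words w with |w|_a = 0 (i.e., all words b^n, n ≥ 0) together with all words w with |w|_a ≥ 1 whose |w|_a-th character (1-indexed) is b. Then L_RCM is strongly counting-regular: for every regular language R ⊆ {a,b}*, the language L_RCM ∩ R is counting-regular. -/

import Mathlib

/-- The counting function of a language: the number of words of length `n`. -/
noncomputable def countFn {α : Type*} (L : Set (List α)) (n : ℕ) : ℕ :=
  Set.ncard {w | w ∈ L ∧ w.length = n}

/-- A language is regular if it is accepted by a DFA with finitely many states. -/
def IsRegularLang {α : Type*} (L : Set (List α)) : Prop :=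
  ∃ (σ : Type) (_ : Fintype σ) (M : DFA α σ), ∀ w, w ∈ M.accepts ↔ w ∈ L

/-- A language is counting-regular if some regular language over a (possibly different)
finite alphabet has the same counting function. -/
def CountingRegular {α : Type*} (L : Set (List α)) : Prop :=
  ∃ (β : Type) (_ : Fintype β) (L' : Set (List β)),
    IsRegularLang L' ∧ ∀ n, countFn L' n = countFn L n


/-- `L_RCM ⊆ {a,b}*` (here `a = 0`, `b = 1`): all words with no `a`, together with all
words `w` with `|w|_a ≥ 1` whose `|w|_a`-th character (1-indexed) is `b`. -/
def LRCM : Set (List (Fin 2)) :=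
  {w | w.count 0 = 0 ∨ (1 ≤ w.count 0 ∧ w[w.count 0 - 1]? = some 1)}

/-!
A word of `LRCM` with `k ≥ 1` letters `a` can be written `x ++ y ++ bᵗ` with `|x| = k - 1`,
where `y` starts with the `b` at position `k`, ends with an `a`, and `|y|_a = |x|_b + 1`.
Interleaving `x` and `y` so that a letter is taken from `x` exactly when the previous letter is
an `a` turns this counting condition into a local one: such pairs `(x, y)` correspond to the
words `v` that start with `b` and end with `a`, the inverse being `unshuffle 1`. Together with
the words `bᵗ` (for `v = []`), `LRCM` is therefore in length-preserving bijection with the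
words `v ++ noneᵗ` over `Option (Fin 2)`. A DFA reading `v` can run `M` on `x` directly and on
`y` through the transformation of states it induces, so the encodings of `LRCM ∩ R` form a
regular language.
-/

open List

theorem countFn_image_of_injOn {α γ : Type*} {S : Set γ} {f : γ → List α} (hf : S.InjOn f)
    (n : ℕ) : countFn (f '' S) n = {s ∈ S | (f s).length = n}.ncard := by
  have : {w | w ∈ f '' S ∧ w.length = n} = f '' {s ∈ S | (f s).length = n} := by
    ext w
    constructor
    · rintro ⟨⟨s, hs, rfl⟩, hn⟩
      exact ⟨s, ⟨hs, hn⟩, rfl⟩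
    · rintro ⟨s, ⟨hs, hn⟩, rfl⟩
      exact ⟨⟨s, hs, rfl⟩, hn⟩
  rw [countFn, this, (hf.mono (Set.sep_subset _ _)).ncard_image]

theorem countFn_image_eq_of_injOn {α β γ : Type*} {S : Set γ} {f : γ → List α}
    {g : γ → List β} (hf : S.InjOn f) (hg : S.InjOn g)
    (hlen : ∀ s ∈ S, (f s).length = (g s).length) (n : ℕ) :
    countFn (f '' S) n = countFn (g '' S) n := by
  rw [countFn_image_of_injOn hf, countFn_image_of_injOn hg]
  congr 1
  ext s
  exact and_congr_right fun hs => by rw [hlen s hs]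

theorem count_zero_add_count_one (l : List (Fin 2)) : l.count 0 + l.count 1 = l.length := by
  induction l with
  | nil => rfl
  | cons c l ih =>
    obtain rfl | rfl : c = 0 ∨ c = 1 := by omega
    all_goals
      simp only [count_cons_self, count_cons_of_ne, ne_eq, zero_ne_one, one_ne_zero,
        not_false_eq_true, length_cons]
      omega

theorem exists_eq_append_replicate_one (l : List (Fin 2)) :
    ∃ y t, l = y ++ replicate t 1 ∧ y.getLast? ≠ some 1 := by
  induction l using List.reverseRecOn with
  | nil => exact ⟨[], 0, rfl, by simp⟩
  | append_singleton l c ih =>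
    obtain rfl | rfl : c = 0 ∨ c = 1 := by omega
    · exact ⟨l ++ [0], 0, by simp, by simp⟩
    · obtain ⟨y, t, rfl, hy⟩ := ih
      exact ⟨y, t + 1, by simp [replicate_succ'], hy⟩

theorem append_replicate_one_inj {y₁ y₂ : List (Fin 2)} {t₁ t₂ : ℕ}
    (h₁ : y₁.getLast? ≠ some 1) (h₂ : y₂.getLast? ≠ some 1)
    (h : y₁ ++ replicate t₁ 1 = y₂ ++ replicate t₂ 1) : y₁ = y₂ ∧ t₁ = t₂ := by
  induction t₁ generalizing t₂ with
  | zero =>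
    cases t₂ with
    | zero => simpa using h
    | succ t₂ =>
      rw [replicate_zero, append_nil] at h
      exact absurd (by rw [h, replicate_succ']; simp) h₁
  | succ t₁ ih =>
    cases t₂ with
    | zero =>
      rw [replicate_zero, append_nil] at h
      exact absurd (by rw [← h, replicate_succ']; simp) h₂
    | succ t₂ =>
      rw [replicate_succ', replicate_succ', ← append_assoc, ← append_assoc] at h
      obtain ⟨rfl, rfl⟩ := ih (append_inj_left' h rfl)
      exact ⟨rfl, rfl⟩

namespace LRCM

def unshuffle : Fin 2 → List (Fin 2) → List (Fin 2) × List (Fin 2)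
  | _, [] => ([], [])
  | p, c :: w =>
    if p = 0 then (c :: (unshuffle c w).1, (unshuffle c w).2)
    else ((unshuffle c w).1, c :: (unshuffle c w).2)

@[simp] theorem unshuffle_nil (p : Fin 2) : unshuffle p [] = ([], []) := rfl

@[simp] theorem unshuffle_zero_cons (c : Fin 2) (w : List (Fin 2)) :
    unshuffle 0 (c :: w) = (c :: (unshuffle c w).1, (unshuffle c w).2) := rfl

@[simp] theorem unshuffle_one_cons (c : Fin 2) (w : List (Fin 2)) :
    unshuffle 1 (c :: w) = ((unshuffle c w).1, c :: (unshuffle c w).2) := rfl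

theorem unshuffle_injective (p : Fin 2) : Function.Injective (unshuffle p) := by
  intro w₁ w₂ h
  induction w₁ generalizing p w₂ with
  | nil =>
    cases w₂ with
    | nil => rfl
    | cons c w₂ =>
      obtain rfl | rfl : p = 0 ∨ p = 1 := by omega
      all_goals simp at h
  | cons c w₁ ih =>
    cases w₂ with
    | nil =>
      obtain rfl | rfl : p = 0 ∨ p = 1 := by omega
      all_goals simp at h
    | cons d w₂ =>
      obtain rfl | rfl : p = 0 ∨ p = 1 := by omega
      · simp only [unshuffle_zero_cons, Prod.mk.injEq, cons.injEq] at h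
        obtain ⟨⟨rfl, hx⟩, hy⟩ := h
        rw [ih c (Prod.ext hx hy)]
      · simp only [unshuffle_one_cons, Prod.mk.injEq, cons.injEq] at h
        obtain ⟨hx, rfl, hy⟩ := h
        rw [ih c (Prod.ext hx hy)]

theorem unshuffle_perm (p : Fin 2) (w : List (Fin 2)) :
    (unshuffle p w).1 ++ (unshuffle p w).2 ~ w := by
  induction w generalizing p with
  | nil => simp
  | cons c w ih =>
    obtain rfl | rfl : p = 0 ∨ p = 1 := by omega
    · exact (ih c).cons c
    · exact perm_middle.trans ((ih c).cons c)

theorem head?_snd_unshuffle_one (w : List (Fin 2)) : (unshuffle 1 w).2.head? = w.head? := by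
  cases w <;> simp

theorem length_fst_unshuffle_add (p : Fin 2) (w : List (Fin 2)) :
    (unshuffle p w).1.length + p.val = w.count 0 + (w.getLast?.getD p).val := by
  induction w generalizing p with
  | nil => simp
  | cons c w ih =>
    have := ih c
    obtain rfl | rfl : p = 0 ∨ p = 1 := by omega
    all_goals obtain rfl | rfl : c = 0 ∨ c = 1 := by omega
    all_goals
      simp only [unshuffle_zero_cons, unshuffle_one_cons, length_cons, count_cons_self,
        count_cons_of_ne, ne_eq, one_ne_zero, not_false_eq_true, getLast?_cons, Option.getD_some,
        Fin.isValue, Fin.coe_ofNat_eq_mod, Nat.zero_mod, Nat.mod_succ, add_zero] at this ⊢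
      omega

theorem getLast?_snd_unshuffle_ne_one (p : Fin 2) (w : List (Fin 2)) (hw : w.getLast? ≠ some 1) :
    (unshuffle p w).2.getLast? ≠ some 1 := by
  induction w generalizing p with
  | nil => simp
  | cons c w ih =>
    have ih := ih c fun h => hw (by simp [getLast?_cons, h])
    obtain rfl | rfl : p = 0 ∨ p = 1 := by omega
    · exact ih
    · cases hy : (unshuffle c w).2.getLast? with
      | some d => simpa [getLast?_cons, hy] using ih
      | none =>
        intro h
        simp only [unshuffle_one_cons, getLast?_cons, hy, Option.getD_none, Option.some.injEq] at h
        subst h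
        obtain rfl : w = [] := by
          rw [← head?_eq_none_iff, ← head?_snd_unshuffle_one, head?_eq_none_iff,
            ← getLast?_eq_none_iff, hy]
        exact hw rfl

theorem exists_unshuffle_eq (p : Fin 2) (x y : List (Fin 2))
    (hcount : y.count 0 = x.count 1 + p.val) (hy : y.getLast? ≠ some 1) :
    ∃ w, unshuffle p w = (x, y) ∧ w.getLast?.getD p = 0 := by
  induction hn : x.length + y.length using Nat.strong_induction_on generalizing p x y with
  | _ n ih =>
    obtain rfl | rfl : p = 0 ∨ p = 1 := by omega
    · cases x with
      | nil =>
        obtain rfl : y = [] := by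
          rw [← getLast?_eq_none_iff]
          cases hl : y.getLast? with
          | none => rfl
          | some d =>
            have hd : d ∈ y := mem_of_getLast? hl
            have : d ≠ 0 := fun h => by simp_all [count_eq_zero]
            exact absurd (by rw [hl]; congr; omega) hy
        exact ⟨[], rfl, rfl⟩
      | cons c x =>
        obtain ⟨w, hw, hlast⟩ := ih _ (by simp only [length_cons] at hn; omega) c x y
          (by rcases (by omega : c = 0 ∨ c = 1) with rfl | rfl <;> simpa using hcount) hy rfl
        exact ⟨c :: w, by simp [hw], by simpa [getLast?_cons] using hlast⟩
    · cases y with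
      | nil => simp at hcount
      | cons c y =>
        obtain ⟨w, hw, hlast⟩ := ih _ (by simp only [length_cons] at hn; omega) c x y
          (by
            rcases (by omega : c = 0 ∨ c = 1) with rfl | rfl <;>
            simp only [count_cons_self, count_cons_of_ne, ne_eq, one_ne_zero, not_false_eq_true,
              Fin.isValue, Fin.coe_ofNat_eq_mod, Nat.zero_mod, Nat.mod_succ] at hcount ⊢ <;>
            omega)
          (fun h => hy (by simp [getLast?_cons, h])) rfl
        exact ⟨c :: w, by simp [hw], by simpa [getLast?_cons] using hlast⟩

/-- The words that are empty or begin with `b = 1` and end with `a = 0`. -/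
def IsCodeword (v : List (Fin 2)) : Prop :=
  v.head? ≠ some 0 ∧ v.getLast? ≠ some 1

def decode (s : List (Fin 2) × ℕ) : List (Fin 2) :=
  (unshuffle 1 s.1).1 ++ (unshuffle 1 s.1).2 ++ replicate s.2 1

def encode (s : List (Fin 2) × ℕ) : List (Option (Fin 2)) :=
  s.1.map some ++ replicate s.2 none

theorem encode_injective : Function.Injective encode := by
  rintro ⟨P₁, t₁⟩ ⟨P₂, t₂⟩ h
  have hP : P₁ = P₂ := by simpa [encode, reduceOption, filterMap_map] using congrArg reduceOption h
  subst hP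
  simpa [encode] using congrArg length h

theorem length_encode (s : List (Fin 2) × ℕ) : (encode s).length = (decode s).length := by
  simp only [encode, decode, length_append, length_map, length_replicate,
    ← (unshuffle_perm 1 s.1).length_eq]

theorem count_zero_decode (s : List (Fin 2) × ℕ) : (decode s).count 0 = s.1.count 0 := by
  simp [decode, count_append, ← (unshuffle_perm 1 s.1).count_eq, count_replicate]

theorem length_fst_unshuffle_one {v : List (Fin 2)} (hv : IsCodeword v) :
    (unshuffle 1 v).1.length = v.count 0 - 1 := by
  have := length_fst_unshuffle_add 1 v
  cases hl : v.getLast? with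
  | none => simp [getLast?_eq_none_iff.1 hl]
  | some d =>
    obtain rfl : d = 0 := by
      have := hv.2
      rw [hl, ne_eq, Option.some.injEq] at this
      omega
    simp only [hl, Option.getD_some, Fin.isValue, Fin.coe_ofNat_eq_mod, Nat.zero_mod,
      Nat.mod_succ, add_zero] at this
    omega

theorem decode_mem {s : List (Fin 2) × ℕ} (hs : IsCodeword s.1) : decode s ∈ LRCM := by
  by_cases h0 : s.1.count 0 = 0
  · exact Or.inl (by rw [count_zero_decode, h0])
  refine Or.inr ⟨by rw [count_zero_decode]; omega, ?_⟩
  have hy : (unshuffle 1 s.1).2.head? = some 1 := by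
    rw [head?_snd_unshuffle_one]
    cases hv : s.1 with
    | nil => simp [hv] at h0
    | cons c v =>
      have := hs.1
      rw [hv] at this
      simp only [head?_cons, ne_eq, Option.some.injEq] at this ⊢
      omega
  obtain ⟨ys, hys⟩ := head?_eq_some_iff.1 hy
  rw [count_zero_decode, ← length_fst_unshuffle_one hs, decode, append_assoc,
    getElem?_append_right le_rfl, Nat.sub_self, hys]
  rfl

theorem decode_injOn : {s | IsCodeword s.1}.InjOn decode := by
  rintro ⟨v₁, t₁⟩ h₁ ⟨v₂, t₂⟩ h₂ h
  have hx : (unshuffle 1 v₁).1.length = (unshuffle 1 v₂).1.length := by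
    rw [length_fst_unshuffle_one h₁, length_fst_unshuffle_one h₂, ← count_zero_decode (v₁, t₁),
      ← count_zero_decode (v₂, t₂), h]
  simp only [decode, append_assoc] at h
  obtain ⟨hx, hrest⟩ := append_inj h hx
  obtain ⟨hy, rfl⟩ := append_replicate_one_inj (getLast?_snd_unshuffle_ne_one 1 _ h₁.2)
    (getLast?_snd_unshuffle_ne_one 1 _ h₂.2) hrest
  rw [unshuffle_injective 1 (Prod.ext hx hy)]

theorem exists_decode_eq_of_count_pos {w : List (Fin 2)} (hk : 1 ≤ w.count 0)
    (hb : w[w.count 0 - 1]? = some 1) : ∃ s, IsCodeword s.1 ∧ decode s = w := by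
  set k := w.count 0
  obtain ⟨hlt, -⟩ := List.getElem?_eq_some_iff.1 hb
  obtain ⟨y, t, hr, hy⟩ := exists_eq_append_replicate_one (w.drop (k - 1))
  have hcount : y.count 0 = (w.take (k - 1)).count 1 + (1 : Fin 2).val := by
    have h1 := congrArg (count 0) (take_append_drop (k - 1) w)
    have h2 := count_zero_add_count_one (w.take (k - 1))
    rw [count_append, hr, count_append] at h1
    simp only [count_replicate, Fin.reduceBEq, Bool.false_eq_true, ↓reduceIte, add_zero,
      length_take, Fin.isValue, Fin.coe_ofNat_eq_mod, Nat.mod_succ] at h1 h2 ⊢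
    omega
  have hyne : y ≠ [] := by
    rintro rfl
    simp at hcount
  obtain ⟨v, hv, hlast⟩ := exists_unshuffle_eq 1 _ _ hcount hy
  refine ⟨(v, t), ⟨?_, fun h => by simp [h] at hlast⟩, ?_⟩
  · rw [← head?_snd_unshuffle_one, hv]
    dsimp only
    rw [← head?_append_of_ne_nil _ hyne, ← hr, head?_drop, hb]
    simp
  · simp [decode, hv, ← hr]

theorem image_decode : decode '' {s | IsCodeword s.1} = LRCM := by
  ext w
  constructor
  · rintro ⟨s, hs, rfl⟩
    exact decode_mem hs
  rintro (h0 | ⟨hk, hb⟩)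
  · refine ⟨([], w.length), by simp [IsCodeword], ?_⟩
    simp only [decode, unshuffle_nil, append_nil, nil_append]
    refine (eq_replicate_iff.2 ⟨rfl, fun c hc => ?_⟩).symm
    have : c ≠ 0 := fun h => by simp_all [count_eq_zero]
    omega
  · exact exists_decode_eq_of_count_pos hk hb

theorem inter_eq_image_decode (L : Set (List (Fin 2))) :
    LRCM ∩ L = decode '' {s | IsCodeword s.1 ∧ decode s ∈ L} := by
  rw [← image_decode, ← Set.image_inter_preimage]
  rfl

/-- States of `codeDFA M`. While reading the letters `some c` of a codeword, `reading qx fy l`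
holds the state `qx` of `M` after the first component of the unshuffled prefix, the action `fy`
of its second component, and the last letter `l`; `padding q` is reached at the first `none`. -/
inductive CodeState (Q : Type) where
  | init
  | reading (qx : Q) (fy : Q → Q) (last : Fin 2)
  | padding (q : Q)
  | dead

instance {Q : Type} [Finite Q] : Finite (CodeState Q) :=
  Finite.of_injective (β := Option (Option (Q × (Q → Q) × Fin 2 ⊕ Q)))
    (fun | .init => none | .dead => some none
         | .reading qx fy l => some (some (.inl (qx, fy, l))) | .padding q => some (some (.inr q)))
    (by rintro (_ | _ | _ | _) (_ | _ | _ | _) h <;> simp_all)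

section codeDFA

variable {Q : Type} (M : DFA (Fin 2) Q)

def codeStep : CodeState Q → Option (Fin 2) → CodeState Q
  | .init, some c => if c = 0 then .dead else .reading M.start (M.step · 1) 1
  | .init, none => .padding (M.step M.start 1)
  | .reading qx fy l, some c =>
    if l = 0 then .reading (M.step qx c) fy c else .reading qx (fun q => M.step (fy q) c) c
  | .reading qx fy l, none => if l = 0 then .padding (M.step (fy qx) 1) else .dead
  | .padding q, none => .padding (M.step q 1)
  | .padding _, some _ => .dead
  | .dead, _ => .dead

def IsAccepting : CodeState Q → Prop
  | .init => M.start ∈ M.accept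
  | .reading qx fy l => l = 0 ∧ fy qx ∈ M.accept
  | .padding q => q ∈ M.accept
  | .dead => False

@[simps]
def codeDFA : DFA (Option (Fin 2)) (CodeState Q) where
  step := codeStep M
  start := .init
  accept := {s | IsAccepting M s}

theorem evalFrom_reading (qx : Q) (fy : Q → Q) (l : Fin 2) (w : List (Fin 2)) :
    (codeDFA M).evalFrom (.reading qx fy l) (w.map some) =
      .reading (M.evalFrom qx (unshuffle l w).1) (fun q => M.evalFrom (fy q) (unshuffle l w).2)
        (w.getLast?.getD l) := by
  induction w generalizing qx fy l with
  | nil => rfl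
  | cons c w ih =>
    obtain rfl | rfl : l = 0 ∨ l = 1 := by omega
    all_goals simp [codeStep, ih, getLast?_cons]

theorem evalFrom_padding (q : Q) (t : ℕ) :
    (codeDFA M).evalFrom (.padding q) (replicate t none) =
      .padding (M.evalFrom q (replicate t 1)) := by
  induction t generalizing q with
  | zero => rfl
  | succ t ih => simp [replicate_succ, codeStep, ih]

theorem evalFrom_dead (τ : List (Option (Fin 2))) : (codeDFA M).evalFrom .dead τ = .dead := by
  induction τ with
  | nil => rfl
  | cons c τ ih => simpa [codeStep] using ih

theorem codeStep_codeStep_none_some (s : CodeState Q) (c : Fin 2) :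
    codeStep M (codeStep M s none) (some c) = .dead := by
  rcases s with _ | ⟨qx, fy, l⟩ | _ | _ <;> simp only [codeStep]
  split_ifs <;> rfl

theorem evalFrom_none_cons_of_some_mem (s : CodeState Q) {u : List (Option (Fin 2))} {c : Fin 2}
    (hc : some c ∈ u) : (codeDFA M).evalFrom s (none :: u) = .dead := by
  induction u generalizing s with
  | nil => simp at hc
  | cons d u ih =>
    cases d with
    | none => exact ih _ (by simpa using hc)
    | some d => simp [codeStep_codeStep_none_some, evalFrom_dead]

theorem evalFrom_reading_replicate_none_mem_accept (qx : Q) (fy : Q → Q) (l : Fin 2) (t : ℕ) :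
    (codeDFA M).evalFrom (.reading qx fy l) (replicate t none) ∈ (codeDFA M).accept ↔
      l = 0 ∧ M.evalFrom (fy qx) (replicate t 1) ∈ M.accept := by
  cases t with
  | zero => simp [IsAccepting]
  | succ t =>
    obtain rfl | rfl : l = 0 ∨ l = 1 := by omega
    all_goals simp [codeStep, IsAccepting, replicate_succ, evalFrom_padding, evalFrom_dead]

theorem encode_mem_accepts_iff (s : List (Fin 2) × ℕ) :
    encode s ∈ (codeDFA M).accepts ↔ IsCodeword s.1 ∧ decode s ∈ M.accepts := by
  obtain ⟨_ | ⟨c, P⟩, t⟩ := s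
  · cases t with
    | zero => simp [encode, decode, IsCodeword, DFA.mem_accepts, IsAccepting]
    | succ t =>
      simp [encode, decode, IsCodeword, DFA.mem_accepts, DFA.eval, replicate_succ, codeStep,
        evalFrom_padding, IsAccepting]
  obtain rfl | rfl : c = 0 ∨ c = 1 := by omega
  · simp [encode, IsCodeword, DFA.mem_accepts, DFA.eval, codeStep, evalFrom_dead, IsAccepting]
  · have hread : (codeDFA M).eval (encode (1 :: P, t)) = (codeDFA M).evalFrom
        (.reading M.start (M.step · 1) 1) (P.map some ++ replicate t none) := by
      simp [encode, DFA.eval, codeStep]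
    rw [DFA.mem_accepts, hread, DFA.evalFrom_of_append, evalFrom_reading,
      evalFrom_reading_replicate_none_mem_accept]
    refine and_congr ?_ ?_
    · simp only [IsCodeword, head?_cons, getLast?_cons, ne_eq, Option.some.injEq]
      omega
    · simp [decode, DFA.mem_accepts, DFA.eval, DFA.evalFrom_of_append]

theorem exists_encode_eq_or_some_mem_after_none (τ : List (Option (Fin 2))) :
    (∃ s, encode s = τ) ∨
      ∃ (P : List (Fin 2)) (u : List (Option (Fin 2))) (c : Fin 2),
        τ = P.map some ++ none :: u ∧ some c ∈ u := by
  induction τ with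
  | nil => exact Or.inl ⟨([], 0), rfl⟩
  | cons d τ ih =>
    cases d with
    | some c =>
      rcases ih with ⟨⟨P, t⟩, rfl⟩ | ⟨P, u, c', rfl, hc'⟩
      · exact Or.inl ⟨(c :: P, t), rfl⟩
      · exact Or.inr ⟨c :: P, u, c', rfl, hc'⟩
    | none =>
      by_cases h : ∃ c, some c ∈ τ
      · obtain ⟨c, hc⟩ := h
        exact Or.inr ⟨[], τ, c, rfl, hc⟩
      · refine Or.inl ⟨([], τ.length + 1), ?_⟩
        simp only [encode, map_nil, nil_append, replicate_succ, cons.injEq, true_and]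
        refine (eq_replicate_iff.2 ⟨rfl, fun d hd => ?_⟩).symm
        cases d with
        | none => rfl
        | some c => exact absurd ⟨c, hd⟩ h

theorem accepts_codeDFA :
    (codeDFA M).accepts = encode '' {s | IsCodeword s.1 ∧ decode s ∈ M.accepts} := by
  ext τ
  constructor
  · intro hτ
    rcases exists_encode_eq_or_some_mem_after_none τ with ⟨s, rfl⟩ | ⟨P, u, c, rfl, hc⟩
    · exact ⟨s, (encode_mem_accepts_iff M s).1 hτ, rfl⟩
    · rw [DFA.mem_accepts, DFA.eval, DFA.evalFrom_of_append,
        evalFrom_none_cons_of_some_mem M _ hc] at hτ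
      exact (hτ : False).elim
  · rintro ⟨s, hs, rfl⟩
    exact (encode_mem_accepts_iff M s).2 hs

end codeDFA

end LRCM

/-- `L_RCM` is strongly counting-regular. -/
theorem stmt6 :
    ∀ R : Set (List (Fin 2)), IsRegularLang R → CountingRegular (LRCM ∩ R) := by
  rintro R ⟨Q, _, M, hM⟩
  refine ⟨Option (Fin 2), inferInstance, (LRCM.codeDFA M).accepts,
    ⟨LRCM.CodeState Q, Fintype.ofFinite _, LRCM.codeDFA M, fun _ => Iff.rfl⟩, fun n => ?_⟩
  rw [LRCM.inter_eq_image_decode, LRCM.accepts_codeDFA]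
  simp only [hM]
  exact countFn_image_eq_of_injOn LRCM.encode_injective.injOn
    (LRCM.decode_injOn.mono fun _ hs => hs.1) (fun s _ => LRCM.length_encode s) n
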